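/- Let K be a field of characteristic 0, p_0,…,p_r ∈ K[X], and L* the operator on K(X) given by L*(u)(X) = ∑_{i=0}^r p_i(X) u(X−i). For every nonconstant polynomial Q ∈ K[X], the subspace K_Q(X) is invariant under L* modulo polynomials: for every u ∈ K_Q(X) there exist w ∈ K_Q(X) and P ∈ K[X] with L*(u) = w + P. -/

import Mathlib

open Polynomial

/-- For a nonconstant polynomial `Q ∈ K[X]`, `KQspan K Q` is the `K`-linear span in `K(X)`
of the fractions `X^ℓ / Q(X+h)^j` with `h ∈ ℤ`, `j ≥ 1` and `0 ≤ ℓ < j·deg Q`. -/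
noncomputable def KQspan (K : Type*) [Field K] (Q : Polynomial K) :
    Submodule K (RatFunc K) :=
  Submodule.span K { f : RatFunc K | ∃ (h : ℤ) (j ℓ : ℕ), 1 ≤ j ∧ ℓ < j * Q.natDegree ∧
    f = algebraMap (Polynomial K) (RatFunc K) (X ^ ℓ) /
        algebraMap (Polynomial K) (RatFunc K) ((Q.comp (X + C (h : K))) ^ j) }

section Aux

variable {K : Type*} [Field K]

lemma algebraMap_eq_aeval_aux (q : Polynomial K) :
    algebraMap (Polynomial K) (RatFunc K) q = aeval RatFunc.X q := by
  have := Polynomial.aeval_algHom_apply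
    (IsScalarTower.toAlgHom K (Polynomial K) (RatFunc K)) X q
  simpa [RatFunc.algebraMap_X] using this.symm

lemma algEquiv_algebraMap_aux (φ : RatFunc K ≃ₐ[K] RatFunc K) (q : Polynomial K) :
    φ (algebraMap (Polynomial K) (RatFunc K) q) = aeval (φ RatFunc.X) q := by
  rw [algebraMap_eq_aeval_aux]
  exact (Polynomial.aeval_algHom_apply φ RatFunc.X q).symm

lemma inv_pow_X_aux (σ : RatFunc K ≃ₐ[K] RatFunc K) (hσ : σ RatFunc.X = RatFunc.X + 1)
    (i : ℕ) : ((σ⁻¹) ^ i) RatFunc.X = RatFunc.X - (i : RatFunc K) := by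
  have hτ : σ⁻¹ RatFunc.X = RatFunc.X - 1 := by
    apply σ.injective
    have : σ⁻¹ RatFunc.X = σ.symm RatFunc.X := rfl
    rw [this, AlgEquiv.apply_symm_apply, map_sub, map_one, hσ]
    ring
  induction i with
  | zero => simp
  | succ n ih =>
    rw [pow_succ', AlgEquiv.mul_apply, ih, map_sub, hτ, map_natCast]
    push_cast
    ring

end Aux

/-- The subspace `K_Q(X)` is invariant under `L* : u ↦ ∑_{i=0}^r p_i · σ^{−i}(u)`
modulo polynomials. -/
theorem KQ_invariant_mod_polynomials (K : Type*) [Field K] [CharZero K]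
    (σ : RatFunc K ≃ₐ[K] RatFunc K) (hσ : σ RatFunc.X = RatFunc.X + 1)
    (r : ℕ) (p : ℕ → Polynomial K)
    (Q : Polynomial K) (hQ : 0 < Q.natDegree)
    (u : RatFunc K) (hu : u ∈ KQspan K Q) :
    ∃ w ∈ KQspan K Q, ∃ P : Polynomial K,
      (∑ i ∈ Finset.range (r + 1),
          algebraMap (Polynomial K) (RatFunc K) (p i) * (σ ^ (-(i : ℤ))) u) =
        w + algebraMap (Polynomial K) (RatFunc K) P := by
  classical
  set algLin : Polynomial K →ₗ[K] RatFunc K :=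
    (IsScalarTower.toAlgHom K (Polynomial K) (RatFunc K)).toLinearMap with halgLin
  set M : Submodule K (RatFunc K) := KQspan K Q ⊔ LinearMap.range algLin with hM
  have hQne : Q ≠ 0 := fun h => by simp [h] at hQ
  -- main claim: the sum lies in M
  have key : (∑ i ∈ Finset.range (r + 1),
      algebraMap (Polynomial K) (RatFunc K) (p i) * (σ ^ (-(i : ℤ))) u) ∈ M := by
    refine Submodule.sum_mem _ fun i _ => ?_
    -- the i-th term as a linear map applied to u
    have hzpow : (σ ^ (-(i : ℤ))) = (σ⁻¹) ^ i := by
      rw [zpow_neg, zpow_natCast, inv_pow]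
    set T : RatFunc K →ₗ[K] RatFunc K :=
      (LinearMap.mulLeft K (algebraMap (Polynomial K) (RatFunc K) (p i))).comp
        ((σ⁻¹ ^ i : RatFunc K ≃ₐ[K] RatFunc K).toLinearMap) with hT
    have hTu : algebraMap (Polynomial K) (RatFunc K) (p i) * (σ ^ (-(i : ℤ))) u = T u := by
      rw [hzpow]; rfl
    rw [hTu]
    have hle : KQspan K Q ≤ M.comap T := by
      rw [KQspan, Submodule.span_le]
      rintro f ⟨h, j, ℓ, hj, hℓ, rfl⟩
      simp only [Set.mem_setOf_eq, SetLike.mem_coe, Submodule.mem_comap]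
      have hTdef : ∀ v : RatFunc K,
          T v = algebraMap (Polynomial K) (RatFunc K) (p i) * ((σ⁻¹ ^ i) v) := fun _ => rfl
      rw [hTdef]
      -- compute (σ⁻¹ ^ i) of the generator
      have hXi : ((σ⁻¹) ^ i) RatFunc.X = RatFunc.X - (i : RatFunc K) :=
        inv_pow_X_aux σ hσ i
      have haev : ∀ q : Polynomial K,
          ((σ⁻¹) ^ i) (algebraMap (Polynomial K) (RatFunc K) q) =
            algebraMap (Polynomial K) (RatFunc K) (q.comp (X - C (i : K))) := by
        intro q
        rw [algEquiv_algebraMap_aux, hXi, algebraMap_eq_aeval_aux, aeval_comp]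
        congr 1
        simp [map_sub, aeval_X, aeval_C, map_natCast]
      rw [map_div₀, haev, haev]
      -- rewrite the denominator
      have hden : (((Q.comp (X + C ((h : K)))) ^ j).comp (X - C (i : K))) =
          (Q.comp (X + C (((h - (i : ℤ) : ℤ)) : K))) ^ j := by
        rw [pow_comp, comp_assoc]
        congr 2
        rw [add_comp, X_comp, C_comp, Int.cast_sub, Int.cast_natCast, C_sub]
        ring
      rw [hden]
      set c : K := (((h - (i : ℤ) : ℤ)) : K) with hc
      set D : Polynomial K := (Q.comp (X + C c)) ^ j with hD
      have hDdeg : D.natDegree = j * Q.natDegree := by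
        rw [hD, natDegree_pow, natDegree_comp, natDegree_X_add_C, mul_one]
      have hDdeg0 : D.natDegree ≠ 0 := by
        rw [hDdeg]; positivity
      have hDne : D ≠ 0 := fun h0 => by simp [h0] at hDdeg0
      set N : Polynomial K := p i * (X ^ ℓ).comp (X - C (i : K)) with hN
      -- Euclidean division
      have hdiv : N = D * (N / D) + N % D := (EuclideanDomain.div_add_mod N D).symm
      have hfrac : algebraMap (Polynomial K) (RatFunc K) (p i) *
          (algebraMap (Polynomial K) (RatFunc K) ((X ^ ℓ).comp (X - C (i : K))) /
            algebraMap (Polynomial K) (RatFunc K) D) =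
          algebraMap (Polynomial K) (RatFunc K) (N / D) +
            algebraMap (Polynomial K) (RatFunc K) (N % D) /
              algebraMap (Polynomial K) (RatFunc K) D := by
        have hDne' : algebraMap (Polynomial K) (RatFunc K) D ≠ 0 :=
          RatFunc.algebraMap_ne_zero hDne
        rw [mul_div_assoc', ← map_mul, ← hN]
        conv_lhs => rw [hdiv]
        rw [map_add, map_mul]
        field_simp
      rw [hfrac]
      -- the remainder part lies in KQspan
      have hmod : algebraMap (Polynomial K) (RatFunc K) (N % D) /
          algebraMap (Polynomial K) (RatFunc K) D ∈ KQspan K Q := by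
        have hdeg : (N % D).natDegree < j * Q.natDegree := by
          rw [← hDdeg]; exact Polynomial.natDegree_mod_lt N hDdeg0
        rw [(N % D).as_sum_range' (j * Q.natDegree) hdeg]
        rw [map_sum, Finset.sum_div]
        refine Submodule.sum_mem _ fun ℓ' hℓ' => ?_
        rw [← C_mul_X_pow_eq_monomial, map_mul, mul_div_assoc]
        have hsm : algebraMap (Polynomial K) (RatFunc K) (C ((N % D).coeff ℓ')) *
            (algebraMap (Polynomial K) (RatFunc K) (X ^ ℓ') /
              algebraMap (Polynomial K) (RatFunc K) D) =
            ((N % D).coeff ℓ') • (algebraMap (Polynomial K) (RatFunc K) (X ^ ℓ') /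
              algebraMap (Polynomial K) (RatFunc K) D) := by
          rw [Algebra.smul_def, IsScalarTower.algebraMap_apply K (Polynomial K) (RatFunc K),
            Polynomial.algebraMap_eq]
        rw [hsm]
        refine Submodule.smul_mem _ _ (Submodule.subset_span ?_)
        exact ⟨h - i, j, ℓ', hj, Finset.mem_range.mp hℓ', rfl⟩
      exact Submodule.add_mem _
        (Submodule.mem_sup_right ⟨N / D, rfl⟩)
        (Submodule.mem_sup_left hmod)
    exact hle hu
  -- extract the decomposition
  rcases Submodule.mem_sup.mp key with ⟨w, hw, z, hz, hsum⟩
  rcases hz with ⟨P, rfl⟩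
  exact ⟨w, hw, P, hsum.symm⟩
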